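/- For f, g ∈ L^∞(T), if the product T_f T_g of the Toeplitz operators is a Toeplitz operator, then either f̄ ∈ H² or g ∈ H², and in that case T_f T_g = T_{fg}. -/

import Mathlib

open MeasureTheory Complex AddCircle
open scoped ENNReal ComplexConjugate InnerProductSpace

noncomputable section

namespace ToeplitzProj

instance : Fact (0 < 2 * Real.pi) := ⟨by positivity⟩
instance : Fact ((1:ℝ≥0∞) ≤ ⊤) := ⟨le_top⟩

abbrev 𝕋 : Type := AddCircle (2 * Real.pi)
abbrev μT : Measure 𝕋 := haarAddCircle
abbrev L2 : Type := Lp ℂ 2 μT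
abbrev Linf : Type := Lp ℂ ⊤ μT

/-- The rank-one operator `f ⊗ g`, acting by `h ↦ ⟨h, g⟩ f = ⟪g, h⟫ • f`. -/
def rankOne {H : Type*} [NormedAddCommGroup H] [InnerProductSpace ℂ H] (f g : H) :
    H →L[ℂ] H := (innerSL ℂ g).smulRight f

theorem memLp_conj (h : L2) : MemLp (fun x => conj ((h : 𝕋 → ℂ) x)) 2 μT :=
  ⟨RCLike.continuous_conj.comp_aestronglyMeasurable (Lp.memLp h).1,
    by
      rw [show (fun x => conj ((h : 𝕋 → ℂ) x)) = conj (h : 𝕋 → ℂ) from rfl, eLpNorm_conj]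
      exact (Lp.memLp h).2⟩

/-- Pointwise complex conjugation on `L²`. -/
def conjL2 (h : L2) : L2 := (memLp_conj h).toLp _

theorem memLp_mul (φ : Linf) (f : L2) :
    MemLp ((φ : 𝕋 → ℂ) • (f : 𝕋 → ℂ)) 2 μT :=
  (Lp.memLp f).smul (Lp.memLp φ)

/-- Multiplication by an `L^∞` function, as a bounded operator on `L²`. -/
def mulCLM (φ : Linf) : L2 →L[ℂ] L2 :=
  LinearMap.mkContinuous
    { toFun := fun f => (memLp_mul φ f).toLp _
      map_add' := by
        intro f g
        rw [← MemLp.toLp_add (memLp_mul φ f) (memLp_mul φ g)]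
        apply MemLp.toLp_congr
        filter_upwards [Lp.coeFn_add f g] with x hx
        simp only [Pi.smul_apply, smul_eq_mul, Pi.mul_apply, hx, Pi.add_apply, mul_add]
      map_smul' := by
        intro c f
        show (memLp_mul φ (c • f)).toLp _ = c • (memLp_mul φ f).toLp _
        rw [← MemLp.toLp_const_smul c (memLp_mul φ f)]
        apply MemLp.toLp_congr
        filter_upwards [Lp.coeFn_smul c f] with x hx
        simp only [Pi.smul_apply, smul_eq_mul, Pi.mul_apply, hx]
        ring }
    ‖φ‖
    (by
      intro f
      simp only [LinearMap.coe_mk, AddHom.coe_mk]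
      rw [Lp.norm_toLp]
      have h := eLpNorm_smul_le_mul_eLpNorm (p := ⊤) (q := 2) (r := 2)
        (Lp.memLp f).1 (Lp.memLp φ).1
      calc (eLpNorm ((φ : 𝕋 → ℂ) • (f : 𝕋 → ℂ)) 2 μT).toReal
          ≤ (eLpNorm (φ : 𝕋 → ℂ) ⊤ μT * eLpNorm (f : 𝕋 → ℂ) 2 μT).toReal := by
            exact ENNReal.toReal_mono (by
              exact ENNReal.mul_ne_top (Lp.memLp φ).2.ne (Lp.memLp f).2.ne) h
        _ = ‖φ‖ * ‖f‖ := by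
            rw [ENNReal.toReal_mul, Lp.norm_def, Lp.norm_def])

/-- The Hardy space `H²` as a subspace of `L²`: the functions whose negative Fourier
coefficients vanish. -/
def Hardy : Submodule ℂ L2 where
  carrier := {f : L2 | ∀ n : ℤ, n < 0 → ⟪(fourierLp 2 n : L2), f⟫_ℂ = 0}
  add_mem' := by
    intro a b ha hb n hn
    rw [inner_add_right, ha n hn, hb n hn, add_zero]
  zero_mem' := by
    intro n hn
    exact inner_zero_right _
  smul_mem' := by
    intro c a ha n hn
    rw [inner_smul_right, ha n hn, mul_zero]

theorem isClosed_Hardy : IsClosed (Hardy : Set L2) := by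
  have : (Hardy : Set L2)
      = ⋂ n : ℤ, ⋂ _ : n < 0, {f : L2 | ⟪(fourierLp 2 n : L2), f⟫_ℂ = 0} := by
    ext f
    simp only [Set.mem_iInter, Set.mem_setOf_eq, SetLike.mem_coe]
    exact Iff.rfl
  rw [this]
  exact isClosed_iInter fun n => isClosed_iInter fun _ =>
    isClosed_eq (Continuous.inner continuous_const continuous_id) continuous_const

instance : CompleteSpace Hardy := isClosed_Hardy.completeSpace_coe

/-- Inclusion of the Hardy space into `L²`. -/
def inclH : Hardy →L[ℂ] L2 := Hardy.subtypeL

/-- The Riesz projection `P : L² → H²`. -/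
def projH : L2 →L[ℂ] Hardy := Hardy.orthogonalProjectionOnto

/-- The Riesz projection, viewed as an operator `L² → L²`. -/
def PFull : L2 →L[ℂ] L2 := inclH ∘L projH

/-- The Toeplitz operator `T_φ f = P(φ f)` on the Hardy space. -/
def Toep (φ : Linf) : Hardy →L[ℂ] Hardy := projH ∘L mulCLM φ ∘L inclH

/-- The Hankel operator `H_φ f = (I − P)(φ f)`, mapping `H²` into `L²`. -/
def Hank (φ : Linf) : Hardy →L[ℂ] L2 := (mulCLM φ ∘L inclH) - (inclH ∘L Toep φ)

/-- A continuous map on the circle, as an element of `L^∞`. -/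
def cLinf (g : C(𝕋, ℂ)) : Linf := ContinuousMap.toLp (E := ℂ) ⊤ μT ℂ g

/-- The coordinate function `z = e^{ix}` in `L^∞`. -/
def zL : Linf := cLinf (fourier 1)

/-- The conjugate coordinate function `z̄ = e^{-ix}` in `L^∞`. -/
def zbarL : Linf := cLinf (fourier (-1))

/-- The constant function `c` in `L^∞`. -/
def constL (c : ℂ) : Linf := cLinf (ContinuousMap.const _ c)

/-- An `L^∞` function, viewed as an element of `L²` (the measure is finite). -/
def toL2 (φ : Linf) : L2 :=
  ((Lp.memLp φ).mono_exponent (le_top : (2:ℝ≥0∞) ≤ ⊤)).toLp φ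

/-- The constant function `1`, as an element of the Hardy space. -/
def oneH : Hardy :=
  ⟨(fourierLp 2 0 : L2), fun n hn => orthonormal_fourier.2 (show n ≠ 0 from hn.ne)⟩

/-- The anti-unitary operator `V` on `L²`, `(Vh)(w) = w̄ · conj (h w)`. -/
def Vop (h : L2) : L2 := mulCLM zbarL (conjL2 h)

/-- `φ ∈ L^∞` is an inner function: `φ ∈ H²` and `|φ| = 1` a.e. -/
def IsInnerFn (u : Linf) : Prop :=
  toL2 u ∈ Hardy ∧ ∀ᵐ x ∂μT, ‖(u : 𝕋 → ℂ) x‖ = 1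

/-- `φ ∈ L^∞` is nonconstant (as an a.e. class). -/
def Nonconst (u : Linf) : Prop := ¬ ∃ c : ℂ, (u : 𝕋 → ℂ) =ᵐ[μT] fun _ => c

/-- `Q` is an orthogonal projection: self-adjoint and idempotent. -/
def IsOrthoProj {H : Type*} [NormedAddCommGroup H] [InnerProductSpace ℂ H]
    [CompleteSpace H] (Q : H →L[ℂ] H) : Prop :=
  IsSelfAdjoint Q ∧ Q ∘L Q = Q

theorem memLinf_conj (φ : Linf) : MemLp (fun x => conj ((φ : 𝕋 → ℂ) x)) ⊤ μT :=
  ⟨RCLike.continuous_conj.comp_aestronglyMeasurable (Lp.memLp φ).1,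
    by
      rw [show (fun x => conj ((φ : 𝕋 → ℂ) x)) = conj (φ : 𝕋 → ℂ) from rfl, eLpNorm_conj]
      exact (Lp.memLp φ).2⟩

/-- Pointwise complex conjugation on `L^∞`. -/
def conjLinf (φ : Linf) : Linf := (memLinf_conj φ).toLp _

/-- The pointwise product of two `L^∞` functions. -/
def mulLinf (φ ψ : Linf) : Linf :=
  (((Lp.memLp ψ).smul (Lp.memLp φ)) :
    MemLp ((φ : 𝕋 → ℂ) • (ψ : 𝕋 → ℂ)) ⊤ μT).toLp _

/-- The Hankel operator `H_φ = (I − P) M_φ P`, as an operator on all of `L²`. -/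
def HankFull (φ : Linf) : L2 →L[ℂ] L2 := (1 - PFull) ∘L mulCLM φ ∘L PFull


/-!
Compressing by the shift: `T_z T_z̄ = I - 1 ⊗ 1` and `T_z̄ T_φ T_z = T_φ` give
`T_z̄ T_f T_g T_z = T_f T_g + (T_z̄ T_f 1) ⊗ (T_z̄ T_ḡ 1)`. So if `T_f T_g` is Toeplitz, one of
the two vectors vanishes; `T_z̄ T_f 1 = 0` says that the positive Fourier coefficients of `f`
vanish, i.e. `f̄ ∈ H²`, and likewise `T_z̄ T_ḡ 1 = 0` says `g ∈ H²`. Multiplication by a bounded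
`g ∈ H²` preserves `H²`, whence `T_f T_g = T_{fg}`; the case `f̄ ∈ H²` follows by taking adjoints.
-/

local notation "𝐞 " n:max => (fourierLp 2 n : L2)

section Representatives

theorem coeFn_mulCLM (φ : Linf) (x : L2) :
    ⇑(mulCLM φ x) =ᵐ[μT] fun t => φ t * x t :=
  MemLp.coeFn_toLp (memLp_mul φ x)

theorem coeFn_toL2 (φ : Linf) : ⇑(toL2 φ) =ᵐ[μT] φ :=
  MemLp.coeFn_toLp _

theorem coeFn_conjLinf (φ : Linf) : ⇑(conjLinf φ) =ᵐ[μT] fun t => conj (φ t) :=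
  MemLp.coeFn_toLp _

theorem coeFn_mulLinf (φ ψ : Linf) : ⇑(mulLinf φ ψ) =ᵐ[μT] fun t => φ t * ψ t :=
  MemLp.coeFn_toLp _

theorem coeFn_zL : ⇑zL =ᵐ[μT] fourier 1 :=
  ContinuousMap.coeFn_toLp μT _

theorem coeFn_zbarL : ⇑zbarL =ᵐ[μT] fourier (-1) :=
  ContinuousMap.coeFn_toLp μT _

theorem inner_eq_integral (u v : L2) : ⟪u, v⟫_ℂ = ∫ t, conj (u t) * v t ∂μT := by
  simp only [MeasureTheory.L2.inner_def, RCLike.inner_apply, mul_comm]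

end Representatives

section Multipliers

theorem conjLinf_conjLinf (φ : Linf) : conjLinf (conjLinf φ) = φ := by
  apply Lp.ext
  filter_upwards [coeFn_conjLinf (conjLinf φ), coeFn_conjLinf φ] with t h1 h2
  rw [h1, h2, conj_conj]

theorem conjLinf_mulLinf (φ ψ : Linf) :
    conjLinf (mulLinf φ ψ) = mulLinf (conjLinf φ) (conjLinf ψ) := by
  apply Lp.ext
  filter_upwards [coeFn_conjLinf (mulLinf φ ψ), coeFn_mulLinf φ ψ,
    coeFn_mulLinf (conjLinf φ) (conjLinf ψ), coeFn_conjLinf φ, coeFn_conjLinf ψ]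
    with t h1 h2 h3 h4 h5
  rw [h1, h2, h3, h4, h5, map_mul]

theorem mulLinf_comm (φ ψ : Linf) : mulLinf φ ψ = mulLinf ψ φ := by
  apply Lp.ext
  filter_upwards [coeFn_mulLinf φ ψ, coeFn_mulLinf ψ φ] with t h1 h2
  rw [h1, h2, mul_comm]

theorem conjLinf_zL : conjLinf zL = zbarL := by
  apply Lp.ext
  filter_upwards [coeFn_conjLinf zL, coeFn_zL, coeFn_zbarL] with t h1 h2 h3
  rw [h1, h2, h3, fourier_neg]

theorem conjLinf_zbarL : conjLinf zbarL = zL := by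
  rw [← conjLinf_zL, conjLinf_conjLinf]

theorem mulCLM_mulLinf (φ ψ : Linf) (x : L2) :
    mulCLM (mulLinf φ ψ) x = mulCLM φ (mulCLM ψ x) := by
  apply Lp.ext
  filter_upwards [coeFn_mulCLM (mulLinf φ ψ) x, coeFn_mulLinf φ ψ,
    coeFn_mulCLM φ (mulCLM ψ x), coeFn_mulCLM ψ x] with t h1 h2 h3 h4
  rw [h1, h2, h3, h4, mul_assoc]

theorem mulCLM_mulCLM_comm (φ ψ : Linf) (x : L2) :
    mulCLM φ (mulCLM ψ x) = mulCLM ψ (mulCLM φ x) := by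
  rw [← mulCLM_mulLinf, mulLinf_comm, mulCLM_mulLinf]

theorem mulCLM_mulCLM_of_mul_eq_one {φ ψ : Linf} (h : ∀ᵐ t ∂μT, φ t * ψ t = 1) (x : L2) :
    mulCLM φ (mulCLM ψ x) = x := by
  apply Lp.ext
  filter_upwards [coeFn_mulCLM φ (mulCLM ψ x), coeFn_mulCLM ψ x, h] with t h1 h2 h3
  rw [h1, h2, ← mul_assoc, h3, one_mul]

theorem mulCLM_zbarL_mulCLM_zL (x : L2) : mulCLM zbarL (mulCLM zL x) = x := by
  refine mulCLM_mulCLM_of_mul_eq_one ?_ x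
  filter_upwards [coeFn_zL, coeFn_zbarL] with t h1 h2
  rw [h1, h2, ← fourier_add, neg_add_cancel, fourier_zero]

theorem mulCLM_zL_mulCLM_zbarL (x : L2) : mulCLM zL (mulCLM zbarL x) = x := by
  refine mulCLM_mulCLM_of_mul_eq_one ?_ x
  filter_upwards [coeFn_zL, coeFn_zbarL] with t h1 h2
  rw [h1, h2, ← fourier_add, add_neg_cancel, fourier_zero]

theorem inner_mulCLM_left (φ : Linf) (u v : L2) :
    ⟪mulCLM φ u, v⟫_ℂ = ⟪u, mulCLM (conjLinf φ) v⟫_ℂ := by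
  rw [inner_eq_integral, inner_eq_integral]
  refine integral_congr_ae ?_
  filter_upwards [coeFn_mulCLM φ u, coeFn_mulCLM (conjLinf φ) v, coeFn_conjLinf φ]
    with t h1 h2 h3
  rw [h1, h2, h3, map_mul]
  ring

theorem inner_mulCLM_right (φ : Linf) (u v : L2) :
    ⟪u, mulCLM φ v⟫_ℂ = ⟪mulCLM (conjLinf φ) u, v⟫_ℂ := by
  rw [inner_mulCLM_left, conjLinf_conjLinf]

theorem mulCLM_adjoint (φ : Linf) :
    ContinuousLinearMap.adjoint (mulCLM φ) = mulCLM (conjLinf φ) :=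
  ((ContinuousLinearMap.eq_adjoint_iff _ _).mpr fun u v => (inner_mulCLM_right φ u v).symm).symm

theorem mulCLM_zL_fourierLp (n : ℤ) : mulCLM zL (𝐞 n) = 𝐞 (n + 1) := by
  apply Lp.ext
  filter_upwards [coeFn_mulCLM zL (𝐞 n), coeFn_zL, coeFn_fourierLp 2 n,
    coeFn_fourierLp 2 (n + 1)] with t h1 h2 h3 h4
  rw [h1, h2, h3, h4, ← fourier_add, add_comm]

theorem mulCLM_zbarL_fourierLp (n : ℤ) : mulCLM zbarL (𝐞 n) = 𝐞 (n - 1) := by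
  conv_lhs => rw [← sub_add_cancel n 1, ← mulCLM_zL_fourierLp]
  exact mulCLM_zbarL_mulCLM_zL _

theorem mulCLM_fourierLp_zero (φ : Linf) : mulCLM φ (𝐞 0) = toL2 φ := by
  apply Lp.ext
  filter_upwards [coeFn_mulCLM φ (𝐞 0), coeFn_fourierLp 2 (0 : ℤ), coeFn_toL2 φ]
    with t h1 h2 h3
  rw [h1, h2, h3, fourier_zero, mul_one]

theorem inner_fourierLp_mulCLM_fourierLp (φ : Linf) (k m : ℤ) :
    ⟪𝐞 k, mulCLM φ (𝐞 m)⟫_ℂ = ⟪𝐞 (k - m), toL2 φ⟫_ℂ := by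
  rw [inner_eq_integral, inner_eq_integral]
  refine integral_congr_ae ?_
  filter_upwards [coeFn_fourierLp 2 k, coeFn_fourierLp 2 m, coeFn_fourierLp 2 (k - m),
    coeFn_mulCLM φ (𝐞 m), coeFn_toL2 φ] with t h1 h2 h3 h4 h5
  rw [h1, h3, h4, h2, h5, ← fourier_neg, ← fourier_neg, neg_sub, sub_eq_add_neg, fourier_add]
  ring

theorem inner_fourierLp_toL2_conjLinf (φ : Linf) (n : ℤ) :
    ⟪𝐞 n, toL2 (conjLinf φ)⟫_ℂ = conj ⟪𝐞 (-n), toL2 φ⟫_ℂ := by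
  rw [inner_eq_integral, inner_eq_integral, ← integral_conj]
  refine integral_congr_ae ?_
  filter_upwards [coeFn_fourierLp 2 n, coeFn_fourierLp 2 (-n), coeFn_toL2 (conjLinf φ),
    coeFn_conjLinf φ, coeFn_toL2 φ] with t h1 h2 h3 h4 h5
  rw [h1, h2, h3, h4, h5, fourier_neg, map_mul, conj_conj]

end Multipliers

section HilbertSpace

variable {H : Type*} [NormedAddCommGroup H] [InnerProductSpace ℂ H]

theorem rankOne_apply (u v w : H) : rankOne u v w = ⟪v, w⟫_ℂ • u := rfl

theorem comp_rankOne (A : H →L[ℂ] H) (u v : H) : A ∘L rankOne u v = rankOne (A u) v := by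
  ext w
  simp [rankOne_apply]

theorem rankOne_comp [CompleteSpace H] (u v : H) (B : H →L[ℂ] H) :
    rankOne u v ∘L B = rankOne u (ContinuousLinearMap.adjoint B v) := by
  ext w
  simp [rankOne_apply, ContinuousLinearMap.adjoint_inner_left]

theorem rankOne_eq_zero_iff {u v : H} : rankOne u v = 0 ↔ u = 0 ∨ v = 0 := by
  refine ⟨fun h => ?_, ?_⟩
  · by_contra! huv
    have huv' := DFunLike.congr_fun h v
    simp [rankOne_apply, huv.1, huv.2] at huv'
  · rintro (rfl | rfl) <;> ext <;> simp [rankOne_apply]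

theorem inner_starProjection_of_mem {K : Submodule ℂ H} [K.HasOrthogonalProjection]
    {w : H} (hw : w ∈ K) (x : H) : ⟪w, K.starProjection x⟫_ℂ = ⟪w, x⟫_ℂ := by
  rw [← K.inner_starProjection_left_eq_right, K.starProjection_eq_self_iff.mpr hw]

end HilbertSpace

section HardySpace

theorem fourierLp_mem_Hardy {n : ℤ} (hn : 0 ≤ n) : 𝐞 n ∈ Hardy :=
  fun _ hm => orthonormal_fourier.2 (by omega)

theorem mulCLM_zL_mem_Hardy {x : L2} (hx : x ∈ Hardy) : mulCLM zL x ∈ Hardy := by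
  intro n hn
  rw [inner_mulCLM_right, conjLinf_zL, mulCLM_zbarL_fourierLp]
  exact hx (n - 1) (by omega)

theorem mulCLM_zbarL_mem_orthogonal {y : L2} (hy : y ∈ Hardyᗮ) : mulCLM zbarL y ∈ Hardyᗮ := by
  intro w hw
  rw [inner_mulCLM_right, conjLinf_zbarL]
  exact hy _ (mulCLM_zL_mem_Hardy hw)

theorem inner_eq_zero_of_fourier_disjoint {x y : L2}
    (h : ∀ n : ℤ, ⟪𝐞 n, x⟫_ℂ = 0 ∨ ⟪𝐞 n, y⟫_ℂ = 0) : ⟪x, y⟫_ℂ = 0 := by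
  refine (fourierBasis.hasSum_inner_mul_inner x y).unique ?_
  convert hasSum_zero with n
  rw [coe_fourierBasis, ← inner_conj_symm x]
  rcases h n with h | h <;> simp [h]

/-- For `n < 0`, `⟪eₙ, g x⟫ = ⟪ḡ eₙ, x⟫`, and `ḡ eₙ` has Fourier support in `(-∞, n]` while
that of `x` lies in `[0, ∞)`. -/
theorem mulCLM_mem_Hardy {g : Linf} (hg : toL2 g ∈ Hardy) {x : L2} (hx : x ∈ Hardy) :
    mulCLM g x ∈ Hardy := by
  intro n hn
  rw [inner_mulCLM_right]
  refine inner_eq_zero_of_fourier_disjoint fun k => ?_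
  rcases lt_or_ge k 0 with hk | hk
  · exact Or.inr (hx k hk)
  · left
    rw [inner_mulCLM_right, conjLinf_conjLinf, ← inner_conj_symm,
      inner_fourierLp_mulCLM_fourierLp, hg (n - k) (by omega), map_zero]

theorem starProjection_mulCLM_zbarL_starProjection (y : L2) :
    Hardy.starProjection (mulCLM zbarL (Hardy.starProjection y))
      = Hardy.starProjection (mulCLM zbarL y) := by
  have h : Hardy.starProjection (mulCLM zbarL (y - Hardy.starProjection y)) = 0 :=
    (Hardy.starProjection_apply_eq_zero_iff).mpr
      (mulCLM_zbarL_mem_orthogonal (Submodule.sub_starProjection_mem_orthogonal y))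
  rwa [map_sub, map_sub, sub_eq_zero, eq_comm] at h

theorem starProjection_mulCLM_zbarL {h : L2} (hh : h ∈ Hardy) :
    Hardy.starProjection (mulCLM zbarL h) = mulCLM zbarL h - ⟪𝐞 0, h⟫_ℂ • 𝐞 (-1) := by
  refine Submodule.eq_starProjection_of_mem_orthogonal ?_ ?_
  · intro n hn
    rw [inner_sub_right, inner_smul_right, inner_mulCLM_right, conjLinf_zbarL,
      mulCLM_zL_fourierLp, orthonormal_iff_ite.mp orthonormal_fourier]
    rcases (show n = -1 ∨ n < -1 by omega) with rfl | hn'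
    · simp
    · rw [if_neg hn'.ne, hh (n + 1) (by omega)]
      simp
  · rw [sub_sub_cancel]
    exact Submodule.smul_mem _ _ fun u hu => inner_eq_zero_symm.mp (hu (-1) (by norm_num))

end HardySpace

section Toeplitz

theorem coe_Toep (φ : Linf) (h : Hardy) :
    (Toep φ h : L2) = Hardy.starProjection (mulCLM φ h) := rfl

theorem Toep_adjoint (φ : Linf) :
    ContinuousLinearMap.adjoint (Toep φ) = Toep (conjLinf φ) := by
  simp only [Toep, inclH, projH, ContinuousLinearMap.adjoint_comp, Submodule.adjoint_subtypeL,
    Submodule.adjoint_orthogonalProjectionOnto, mulCLM_adjoint, ContinuousLinearMap.comp_assoc]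

theorem coe_Toep_zL (h : Hardy) : (Toep zL h : L2) = mulCLM zL h :=
  Submodule.starProjection_eq_self_iff.mpr (mulCLM_zL_mem_Hardy h.2)

theorem Toep_zbarL_comp_Toep_comp_Toep_zL (φ : Linf) :
    Toep zbarL ∘L Toep φ ∘L Toep zL = Toep φ := by
  ext1 h
  apply Subtype.ext
  rw [ContinuousLinearMap.comp_apply, ContinuousLinearMap.comp_apply, coe_Toep zbarL, coe_Toep φ,
    starProjection_mulCLM_zbarL_starProjection, coe_Toep_zL, mulCLM_mulCLM_comm,
    mulCLM_zbarL_mulCLM_zL, coe_Toep]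

theorem Toep_zL_comp_Toep_zbarL : Toep zL ∘L Toep zbarL = 1 - rankOne oneH oneH := by
  ext1 h
  apply Subtype.ext
  rw [ContinuousLinearMap.comp_apply, coe_Toep_zL, coe_Toep, starProjection_mulCLM_zbarL h.2,
    map_sub, map_smul, mulCLM_zL_mulCLM_zbarL, mulCLM_zL_fourierLp, neg_add_cancel]
  rfl

end Toeplitz

section Products

theorem Toep_zbarL_comp_Toep_comp_Toep_comp_Toep_zL (f g : Linf) :
    Toep zbarL ∘L ((Toep f ∘L Toep g) ∘L Toep zL)
      = Toep f ∘L Toep g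
        + rankOne (Toep zbarL (Toep f oneH)) (Toep zbarL (Toep (conjLinf g) oneH)) := by
  have hid : Toep zL ∘L Toep zbarL + rankOne oneH oneH = 1 := by
    rw [Toep_zL_comp_Toep_zbarL, sub_add_cancel]
  calc Toep zbarL ∘L ((Toep f ∘L Toep g) ∘L Toep zL)
      = Toep zbarL ∘L Toep f ∘L (Toep zL ∘L Toep zbarL + rankOne oneH oneH)
          ∘L Toep g ∘L Toep zL := by
        rw [hid, ContinuousLinearMap.one_def, ContinuousLinearMap.id_comp,
          ContinuousLinearMap.comp_assoc]
    _ = (Toep zbarL ∘L Toep f ∘L Toep zL) ∘L (Toep zbarL ∘L Toep g ∘L Toep zL)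
          + Toep zbarL ∘L Toep f ∘L rankOne oneH oneH ∘L Toep g ∘L Toep zL := by
        simp only [ContinuousLinearMap.add_comp, ContinuousLinearMap.comp_add,
          ContinuousLinearMap.comp_assoc]
    _ = _ := by
        rw [Toep_zbarL_comp_Toep_comp_Toep_zL, Toep_zbarL_comp_Toep_comp_Toep_zL, rankOne_comp,
          comp_rankOne, comp_rankOne, ContinuousLinearMap.adjoint_comp, Toep_adjoint,
          Toep_adjoint, conjLinf_zL]
        rfl

theorem inner_fourierLp_Toep_zbarL_Toep_oneH (φ : Linf) {k : ℤ} (hk : 0 ≤ k) :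
    ⟪𝐞 k, (Toep zbarL (Toep φ oneH) : L2)⟫_ℂ = ⟪𝐞 (k + 1), toL2 φ⟫_ℂ := by
  rw [coe_Toep, inner_starProjection_of_mem (fourierLp_mem_Hardy hk), inner_mulCLM_right,
    conjLinf_zbarL, mulCLM_zL_fourierLp, coe_Toep,
    inner_starProjection_of_mem (fourierLp_mem_Hardy (by omega))]
  exact congrArg _ (mulCLM_fourierLp_zero φ)

theorem conj_mem_Hardy_of_Toep_zbarL_Toep_oneH_eq_zero {φ : Linf}
    (h : Toep zbarL (Toep φ oneH) = 0) : toL2 (conjLinf φ) ∈ Hardy := by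
  intro n hn
  have hcoeff := inner_fourierLp_Toep_zbarL_Toep_oneH φ (k := -n - 1) (by omega)
  rw [h, Submodule.coe_zero, inner_zero_right, sub_add_cancel] at hcoeff
  rw [inner_fourierLp_toL2_conjLinf, ← hcoeff, map_zero]

theorem Toep_comp_Toep_of_mem_Hardy (f : Linf) {g : Linf} (hg : toL2 g ∈ Hardy) :
    Toep f ∘L Toep g = Toep (mulLinf f g) := by
  ext1 h
  apply Subtype.ext
  have hgh : (Toep g h : L2) = mulCLM g h :=
    Hardy.starProjection_eq_self_iff.mpr (mulCLM_mem_Hardy hg h.2)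
  rw [ContinuousLinearMap.comp_apply, coe_Toep f, hgh, coe_Toep, mulCLM_mulLinf]

theorem Toep_comp_Toep_of_conj_mem_Hardy {f : Linf} (hf : toL2 (conjLinf f) ∈ Hardy) (g : Linf) :
    Toep f ∘L Toep g = Toep (mulLinf f g) := by
  have h := congrArg ContinuousLinearMap.adjoint (Toep_comp_Toep_of_mem_Hardy (conjLinf g) hf)
  rwa [ContinuousLinearMap.adjoint_comp, Toep_adjoint, Toep_adjoint, Toep_adjoint,
    conjLinf_mulLinf, conjLinf_conjLinf, conjLinf_conjLinf, mulLinf_comm] at h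

end Products

/-- If `T_f T_g` is a Toeplitz operator (Brown–Halmos: `T_{z̄} A T_z = A`), then `f̄ ∈ H²`
or `g ∈ H²`, and in that case `T_f T_g = T_{fg}`. -/
theorem toeplitz_product_is_toeplitz (f g : Linf)
    (h : Toep zbarL ∘L ((Toep f ∘L Toep g) ∘L Toep zL) = Toep f ∘L Toep g) :
    (toL2 (conjLinf f) ∈ Hardy ∨ toL2 g ∈ Hardy) ∧
      Toep f ∘L Toep g = Toep (mulLinf f g) := by
  have hrank := Toep_zbarL_comp_Toep_comp_Toep_comp_Toep_zL f g
  rw [h, left_eq_add, rankOne_eq_zero_iff] at hrank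
  rcases hrank with hf | hg
  · have hf := conj_mem_Hardy_of_Toep_zbarL_Toep_oneH_eq_zero hf
    exact ⟨Or.inl hf, Toep_comp_Toep_of_conj_mem_Hardy hf g⟩
  · have hg := conj_mem_Hardy_of_Toep_zbarL_Toep_oneH_eq_zero hg
    rw [conjLinf_conjLinf] at hg
    exact ⟨Or.inr hg, Toep_comp_Toep_of_mem_Hardy f hg⟩

end ToeplitzProj
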